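/- Idempotence of the transformation: let T > 0, let f : AddCircle T → ℂ be integrable with c₁(f) ≠ 0, and let φ : ℝ. Then c₁(𝒯(f,φ)) ≠ 0, and 𝒯(𝒯(f,φ), φ) = 𝒯(f,φ) as functions AddCircle T → ℂ; i.e., a signal already mapped to the manifold of angle φ is left unchanged by a second application of the transformation with the same angle. -/

import Mathlib

/-!
Shifting `f` by `a` multiplies `c₁(f)` by `exp (-2πi a / T)`, and `Δφ(f, φ)` is chosen so that
`2π Δφ / T ≡ θ(f, φ) ≡ arg c₁(f) - φ (mod 2π)`. Hence `arg c₁(𝒯(f, φ)) ≡ φ`, so the second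
application has `θ = 0`, hence `Δφ = 0`, and shifts by nothing.
-/

open MeasureTheory

/-- `θ(f, φ)` -/
noncomputable def theta (T : ℝ) [Fact (0 < T)] (f : AddCircle T → ℂ) (φ : ℝ) : ℝ :=
  toIcoMod Real.two_pi_pos 0 (Complex.arg (fourierCoeff f 1) - φ)

/-- `Δφ(f, φ)` -/
noncomputable def deltaPhi (T : ℝ) [Fact (0 < T)] (f : AddCircle T → ℂ) (φ : ℝ) : ℝ :=
  if theta T f φ > Real.pi then (theta T f φ - 2 * Real.pi) * T / (2 * Real.pi)
  else theta T f φ * T / (2 * Real.pi)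

/-- `𝒯(f, φ)` -/
noncomputable def transf (T : ℝ) [Fact (0 < T)] (f : AddCircle T → ℂ) (φ : ℝ) :
    AddCircle T → ℂ :=
  fun x => f (x - (deltaPhi T f φ : AddCircle T))

open AddCircle Complex Real

section FourierShift

variable {T : ℝ}

theorem fourier_apply_add (n : ℤ) (x y : AddCircle T) :
    fourier n (x + y) = fourier n x * fourier n y := by
  simp only [fourier_apply, smul_add, toCircle_add, Circle.coe_mul]

theorem fourierCoeff_comp_sub [Fact (0 < T)] {E : Type*} [NormedAddCommGroup E]
    [NormedSpace ℂ E] (f : AddCircle T → E) (a : AddCircle T) (n : ℤ) :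
    fourierCoeff (fun x => f (x - a)) n = fourier (-n) a • fourierCoeff f n := by
  rw [fourierCoeff, fourierCoeff, ← integral_smul,
    ← integral_add_right_eq_self (fun t => fourier (-n) t • f (t - a)) a]
  simp only [add_sub_cancel_right, fourier_apply_add, smul_smul, mul_comm]

theorem coe_arg_fourier_neg_one_coe (a : ℝ) :
    (arg (fourier (-1) (a : AddCircle T)) : Angle) = ↑(-(2 * π / T * a)) := by
  rw [fourier_apply, neg_one_zsmul, ← AddCircle.coe_neg, toCircle_apply_mk,
    ← Angle.toCircle_coe, Angle.arg_toCircle, mul_neg]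

end FourierShift

section Transf

variable (T : ℝ) [Fact (0 < T)] (f : AddCircle T → ℂ) (φ : ℝ)

theorem coe_theta : (theta T f φ : Angle) = arg (fourierCoeff f 1) - φ := by
  rw [theta, Angle.coe_toIcoMod, Angle.coe_sub]

theorem coe_two_pi_div_mul_deltaPhi :
    ((2 * π / T * deltaPhi T f φ : ℝ) : Angle) = arg (fourierCoeff f 1) - φ := by
  have hT : T ≠ 0 := (Fact.out : 0 < T).ne'
  rw [← coe_theta, deltaPhi]
  split_ifs
  · rw [show 2 * π / T * ((theta T f φ - 2 * π) * T / (2 * π)) = theta T f φ - 2 * π by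
      field_simp, Angle.coe_sub, Angle.coe_two_pi, sub_zero]
  · congr 1
    field_simp

theorem theta_eq_zero_of_coe_arg_eq (h : (arg (fourierCoeff f 1) : Angle) = φ) :
    theta T f φ = 0 := by
  obtain ⟨k, hk⟩ := Angle.coe_eq_zero_iff.mp (by rw [Angle.coe_sub, h, sub_self] :
    ((arg (fourierCoeff f 1) - φ : ℝ) : Angle) = 0)
  rw [theta, ← hk, ← zero_add (k • (2 * π)), toIcoMod_add_zsmul, toIcoMod_apply_left]

theorem transf_eq_self_of_coe_arg_eq (h : (arg (fourierCoeff f 1) : Angle) = φ) :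
    transf T f φ = f := by
  have h0 : deltaPhi T f φ = 0 := by
    simp [deltaPhi, theta_eq_zero_of_coe_arg_eq T f φ h, pi_pos.le]
  funext x
  simp [transf, h0]

theorem fourierCoeff_one_transf :
    fourierCoeff (transf T f φ) 1 =
      fourier (-1) (deltaPhi T f φ : AddCircle T) * fourierCoeff f 1 :=
  fourierCoeff_comp_sub f _ 1

theorem coe_arg_fourierCoeff_one_transf (hc : fourierCoeff f 1 ≠ 0) :
    (arg (fourierCoeff (transf T f φ) 1) : Angle) = φ := by
  rw [fourierCoeff_one_transf, arg_mul_coe_angle (by simp) hc, coe_arg_fourier_neg_one_coe,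
    Angle.coe_neg, coe_two_pi_div_mul_deltaPhi]
  abel

end Transf

theorem transf_idempotent_general (T : ℝ) [Fact (0 < T)] (f : AddCircle T → ℂ)
    (hc : fourierCoeff f 1 ≠ 0) (φ : ℝ) :
    fourierCoeff (transf T f φ) 1 ≠ 0 ∧ transf T (transf T f φ) φ = transf T f φ := by
  refine ⟨?_, transf_eq_self_of_coe_arg_eq T _ φ (coe_arg_fourierCoeff_one_transf T f φ hc)⟩
  rw [fourierCoeff_one_transf]
  exact mul_ne_zero (by simp) hc

/-- Idempotence of the transformation: a signal already mapped to the manifold of angle `φ`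
is left unchanged by a second application of the transformation with the same angle. -/
theorem transf_idempotent (T : ℝ) [Fact (0 < T)] (f : AddCircle T → ℂ)
    (hf : Integrable f AddCircle.haarAddCircle) (hc : fourierCoeff f 1 ≠ 0) (φ : ℝ) :
    fourierCoeff (transf T f φ) 1 ≠ 0 ∧ transf T (transf T f φ) φ = transf T f φ :=
  transf_idempotent_general T f hc φ
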